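/- Let n ≥ 1 and let Ω be an open subset of ℝⁿ. Then γ(Ω)² ≤ 4·Λ(Ω), i.e. the square of the isoperimetric (Cheeger) constant of Ω is at most four times the fundamental Dirichlet–Laplace constant of Ω. -/

import Mathlib

open MeasureTheory Metric Set Filter
open scoped ENNReal Topology

noncomputable section

/-- Smooth compactly supported test function in an open set `Ω`. -/
def TestFun {n : ℕ} (Ω : Set (EuclideanSpace ℝ (Fin n)))
    (u : EuclideanSpace ℝ (Fin n) → ℝ) : Prop :=
  ContDiff ℝ (⊤ : ℕ∞) u ∧ HasCompactSupport u ∧ tsupport u ⊆ Ω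

/-- The fundamental Dirichlet–Laplace constant
`Λ(Ω) = inf { ∫_Ω |∇u|² / ∫_Ω u² : u ∈ C_0^∞(Ω), u ≠ 0 }`. -/
def Lambda {n : ℕ} (Ω : Set (EuclideanSpace ℝ (Fin n))) : ℝ :=
  sInf {r : ℝ | ∃ u : EuclideanSpace ℝ (Fin n) → ℝ, TestFun Ω u ∧ u ≠ 0 ∧
    r = (∫ x in Ω, ‖fderiv ℝ u x‖ ^ 2) / ∫ x in Ω, (u x) ^ 2}

/-- The Cheeger (isoperimetric) constant
`γ(Ω) = inf { ∫_Ω |∇u| / ∫_Ω |u| : u ∈ C_0^∞(Ω), u ≠ 0 }`. -/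
def cheegerConst {n : ℕ} (Ω : Set (EuclideanSpace ℝ (Fin n))) : ℝ :=
  sInf {r : ℝ | ∃ u : EuclideanSpace ℝ (Fin n) → ℝ, TestFun Ω u ∧ u ≠ 0 ∧
    r = (∫ x in Ω, ‖fderiv ℝ u x‖) / ∫ x in Ω, |u x|}

/-! Apply the defining inequality of `γ(Ω)` to `u²`: since `∇(u²) = 2u∇u`, Cauchy–Schwarz gives
`γ(Ω) ∫ u² ≤ ∫ |∇(u²)| ≤ 2 (∫ u²)^{1/2} (∫ |∇u|²)^{1/2}`, i.e. `γ(Ω)² ≤ 4 ∫ |∇u|² / ∫ u²`. -/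

theorem integral_norm_mul_norm_le_sqrt_mul_sqrt {α E F : Type*} [MeasurableSpace α]
    {μ : Measure α} [NormedAddCommGroup E] [NormedAddCommGroup F] {f : α → E} {g : α → F}
    (hf : MemLp f 2 μ) (hg : MemLp g 2 μ) :
    ∫ a, ‖f a‖ * ‖g a‖ ∂μ ≤ √(∫ a, ‖f a‖ ^ 2 ∂μ) * √(∫ a, ‖g a‖ ^ 2 ∂μ) := by
  have h := integral_mul_le_Lp_mul_Lq_of_nonneg Real.HolderConjugate.two_two
    (Eventually.of_forall fun a => norm_nonneg (f a))
    (Eventually.of_forall fun a => norm_nonneg (g a))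
    (by simpa using hf.norm) (by simpa using hg.norm)
  simpa only [Real.rpow_two, Real.sqrt_eq_rpow, one_div] using h

theorem tsupport_pow {X M₀ : Type*} [TopologicalSpace X] [MonoidWithZero M₀] [IsReduced M₀]
    (f : X → M₀) {k : ℕ} (hk : k ≠ 0) : tsupport (fun x => f x ^ k) = tsupport f := by
  rw [tsupport, Function.support_pow f hk, tsupport]

theorem norm_fderiv_sq {E : Type*} [NormedAddCommGroup E] [NormedSpace ℝ E] {u : E → ℝ} {x : E}
    (hu : DifferentiableAt ℝ u x) :
    ‖fderiv ℝ (fun y => u y ^ 2) x‖ = 2 * |u x| * ‖fderiv ℝ u x‖ := by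
  rw [(hu.hasFDerivAt.pow 2).fderiv, norm_smul]
  simp [mul_assoc]

namespace TestFun

variable {n : ℕ} {Ω : Set (EuclideanSpace ℝ (Fin n))} {u : EuclideanSpace ℝ (Fin n) → ℝ}

theorem differentiable (hu : TestFun Ω u) : Differentiable ℝ u :=
  hu.1.differentiable (by simp)

theorem memLp_two (hu : TestFun Ω u) (μ : Measure (EuclideanSpace ℝ (Fin n)))
    [IsFiniteMeasureOnCompacts μ] : MemLp u 2 μ :=
  hu.1.continuous.memLp_of_hasCompactSupport hu.2.1

theorem memLp_two_fderiv (hu : TestFun Ω u) (μ : Measure (EuclideanSpace ℝ (Fin n)))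
    [IsFiniteMeasureOnCompacts μ] : MemLp (fderiv ℝ u) 2 μ :=
  (hu.1.continuous_fderiv (by simp)).memLp_of_hasCompactSupport (hu.2.1.fderiv ℝ)

theorem sq (hu : TestFun Ω u) : TestFun Ω (fun x => u x ^ 2) :=
  ⟨hu.1.pow 2, by rw [HasCompactSupport, tsupport_pow u two_ne_zero]; exact hu.2.1,
    (tsupport_pow u two_ne_zero).trans_subset hu.2.2⟩

theorem integral_abs_pos (hu : TestFun Ω u) (hu0 : u ≠ 0) : 0 < ∫ x in Ω, |u x| := by
  obtain ⟨x, hx⟩ := Function.ne_iff.1 hu0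
  rw [setIntegral_eq_integral_of_forall_compl_eq_zero fun y hy => by
    rw [image_eq_zero_of_notMem_tsupport fun h => hy (hu.2.2 h), abs_zero]]
  exact hu.1.continuous.abs.integral_pos_of_hasCompactSupport_nonneg_nonzero hu.2.1.abs
    (fun y => abs_nonneg (u y)) (abs_ne_zero.2 hx)

end TestFun

section Constants

variable {n : ℕ} {Ω : Set (EuclideanSpace ℝ (Fin n))} {u : EuclideanSpace ℝ (Fin n) → ℝ}

variable (Ω u) in
theorem cheegerQuotient_nonneg : 0 ≤ (∫ x in Ω, ‖fderiv ℝ u x‖) / ∫ x in Ω, |u x| :=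
  div_nonneg (integral_nonneg fun _ => norm_nonneg _) (integral_nonneg fun _ => abs_nonneg _)

theorem cheegerConst_nonneg : 0 ≤ cheegerConst Ω :=
  Real.sInf_nonneg <| by rintro _ ⟨u, -, -, rfl⟩; exact cheegerQuotient_nonneg Ω u

theorem cheegerConst_mul_integral_abs_le (hu : TestFun Ω u) (hu0 : u ≠ 0) :
    cheegerConst Ω * ∫ x in Ω, |u x| ≤ ∫ x in Ω, ‖fderiv ℝ u x‖ := by
  have hbdd : BddBelow {r : ℝ | ∃ u : EuclideanSpace ℝ (Fin n) → ℝ, TestFun Ω u ∧ u ≠ 0 ∧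
      r = (∫ x in Ω, ‖fderiv ℝ u x‖) / ∫ x in Ω, |u x|} :=
    ⟨0, by rintro _ ⟨v, -, -, rfl⟩; exact cheegerQuotient_nonneg Ω v⟩
  rw [← le_div_iff₀ (hu.integral_abs_pos hu0)]
  exact csInf_le hbdd ⟨u, hu, hu0, rfl⟩

theorem cheegerConst_eq_zero_of_forall_testFun_eq_zero (h : ∀ u, TestFun Ω u → u = 0) :
    cheegerConst Ω = 0 := by
  rw [cheegerConst]
  convert Real.sInf_empty
  refine eq_empty_of_forall_notMem ?_
  rintro _ ⟨u, hu, hu0, -⟩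
  exact hu0 (h u hu)

theorem Lambda_eq_zero_of_forall_testFun_eq_zero (h : ∀ u, TestFun Ω u → u = 0) :
    Lambda Ω = 0 := by
  rw [Lambda]
  convert Real.sInf_empty
  refine eq_empty_of_forall_notMem ?_
  rintro _ ⟨u, hu, hu0, -⟩
  exact hu0 (h u hu)

theorem cheegerConst_sq_le (hu : TestFun Ω u) (hu0 : u ≠ 0) :
    cheegerConst Ω ^ 2 ≤ 4 * ((∫ x in Ω, ‖fderiv ℝ u x‖ ^ 2) / ∫ x in Ω, u x ^ 2) := by
  set A := ∫ x in Ω, ‖fderiv ℝ u x‖ ^ 2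
  set B := ∫ x in Ω, u x ^ 2
  have hsq0 : (fun x => u x ^ 2) ≠ 0 := fun h =>
    hu0 (funext fun x => pow_eq_zero_iff two_ne_zero |>.1 (congrFun h x))
  have hB : 0 < B := by simpa only [abs_sq] using hu.sq.integral_abs_pos hsq0
  have hγB : cheegerConst Ω * B ≤ 2 * (√B * √A) := calc
    cheegerConst Ω * B = cheegerConst Ω * ∫ x in Ω, |u x ^ 2| := by simp only [abs_sq, B]
    _ ≤ ∫ x in Ω, ‖fderiv ℝ (fun y => u y ^ 2) x‖ := cheegerConst_mul_integral_abs_le hu.sq hsq0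
    _ = 2 * ∫ x in Ω, ‖u x‖ * ‖fderiv ℝ u x‖ := by
      simp only [norm_fderiv_sq (hu.differentiable _), mul_assoc, Real.norm_eq_abs]
      exact integral_const_mul 2 _
    _ ≤ 2 * (√(∫ x in Ω, ‖u x‖ ^ 2) * √A) := by
      gcongr
      exact integral_norm_mul_norm_le_sqrt_mul_sqrt (hu.memLp_two _) (hu.memLp_two_fderiv _)
    _ = 2 * (√B * √A) := by simp only [Real.norm_eq_abs, sq_abs, B]
  have hA : 0 ≤ A := integral_nonneg fun x => sq_nonneg _
  have hsq := pow_le_pow_left₀ (mul_nonneg cheegerConst_nonneg hB.le) hγB 2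
  rw [mul_pow, mul_pow, mul_pow, Real.sq_sqrt hB.le, Real.sq_sqrt hA] at hsq
  rw [← mul_div_assoc, le_div_iff₀ hB]
  nlinarith

end Constants

theorem stmt_0_general (n : ℕ) (Ω : Set (EuclideanSpace ℝ (Fin n))) :
    cheegerConst Ω ^ 2 ≤ 4 * Lambda Ω := by
  by_cases h : ∀ u, TestFun Ω u → u = 0
  · rw [cheegerConst_eq_zero_of_forall_testFun_eq_zero h,
      Lambda_eq_zero_of_forall_testFun_eq_zero h]
    norm_num
  push Not at h
  obtain ⟨u, hu, hu0⟩ := h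
  rw [← div_le_iff₀' four_pos]
  refine le_csInf ⟨_, u, hu, hu0, rfl⟩ ?_
  rintro _ ⟨v, hv, hv0, rfl⟩
  rw [div_le_iff₀' four_pos]
  exact cheegerConst_sq_le hv hv0

/-- `γ(Ω)² ≤ 4·Λ(Ω)` for every open `Ω ⊆ ℝⁿ`, `n ≥ 1`. -/
theorem stmt_0 (n : ℕ) (hn : 1 ≤ n) (Ω : Set (EuclideanSpace ℝ (Fin n)))
    (hΩ : IsOpen Ω) :
    cheegerConst Ω ^ 2 ≤ 4 * Lambda Ω :=
  stmt_0_general n Ω
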